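/- arXiv:1711.07688 — 2 statements merged into one kernel-verified Lean document; each statement's English description precedes it below -/
import Mathlib

section
/- Let λ ∈ ℝ and let μ be a nonzero λ-eigenmeasure of r̃+J̃ which is absolutely continuous with a continuous nonnegative density u, i.e. μ(A) = ∫_A u(x) dx. Then u(x) > 0 for every x ∈ S and λ > r̄ := max_{x∈S} r(x). -/
/-!
Writing `μ = u dx` on `S`, the defining identity of an eigenmeasure compares integrals of
continuous functions over every Borel `A ⊆ S`; since `S` is the closure of its interior, it
therefore holds pointwise: `u r + ∫_S u(y) K(y, ·) dy = λ u` on `S`. Where `u` vanishes, the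
nonnegative integral vanishes, which forces `u = 0` wherever `K(·, x) > 0`, in particular near
`x`. So the zero set of `u` is relatively clopen in the connected set `S`, and it is empty because
`μ ≠ 0`. At a maximum point `x` of `r` the identity then reads `(λ - r̄) u(x) = ∫_S u K(·, x) > 0`.
-/

open MeasureTheory Filter Topology

/-- A finite positive Borel measure μ on S is a λ-eigenmeasure of the operator r̃+J̃ if for
every Borel set A ⊆ S one has ∫_A r dμ + ∫_A (∫_S K(y,x) μ(dy)) dx = λ μ(A). -/
def IsEigenmeasure {d : ℕ} (S : Set (EuclideanSpace ℝ (Fin d)))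
    (r : EuclideanSpace ℝ (Fin d) → ℝ)
    (K : EuclideanSpace ℝ (Fin d) → EuclideanSpace ℝ (Fin d) → ℝ)
    (lam : ℝ) (μ : MeasureTheory.Measure (EuclideanSpace ℝ (Fin d))) : Prop :=
  ∀ A : Set (EuclideanSpace ℝ (Fin d)), MeasurableSet A → A ⊆ S →
    (∫ x in A, r x ∂μ) + (∫ x in A, (∫ y in S, K y x ∂μ)) = lam * (μ A).toReal

open Set

theorem IsPreconnected.eqOn_const_of_eventually_eq {X Y : Type*} [TopologicalSpace X]
    [TopologicalSpace Y] [T1Space Y] {s : Set X} (hs : IsPreconnected s) {f : X → Y}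
    (hf : ContinuousOn f s) {c : Y} (hc : ∀ x ∈ s, f x = c → ∀ᶠ y in 𝓝[s] x, f y = c)
    {x₀ : X} (hx₀ : x₀ ∈ s) (h : f x₀ = c) : EqOn f (fun _ ↦ c) s := by
  refine fun x hx ↦ (hs.induction₂ (fun a b ↦ (f a = c ↔ f b = c)) (fun a ha ↦ ?_)
    (fun _ _ _ _ _ _ ↦ Iff.trans) (fun _ _ _ _ ↦ Iff.symm) hx₀ hx).1 h
  by_cases hfa : f a = c
  · filter_upwards [hc a ha hfa] with y hy using iff_of_true hfa hy
  · filter_upwards [(hf a ha).tendsto.eventually_ne hfa] with y hy using iff_of_false hfa hy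

section Density

variable {α : Type*} [MeasurableSpace α] {μ ν : Measure α} [IsFiniteMeasure μ] {s : Set α}
  {ρ : α → ℝ}

theorem restrict_eq_withDensity_of_toReal_eq_setIntegral (hs : MeasurableSet s)
    (hρ : IntegrableOn ρ s ν) (hρnn : ∀ x ∈ s, 0 ≤ ρ x)
    (h : ∀ A, MeasurableSet A → A ⊆ s → (μ A).toReal = ∫ x in A, ρ x ∂ν) :
    μ.restrict s = (ν.restrict s).withDensity (fun x ↦ ENNReal.ofReal (ρ x)) := by
  ext A hA
  rw [Measure.restrict_apply hA, withDensity_apply _ hA, Measure.restrict_restrict hA,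
    ← ofReal_integral_eq_lintegral_ofReal (hρ.mono_set inter_subset_right)
      (ae_restrict_of_forall_mem (hA.inter hs) fun x hx ↦ hρnn x hx.2),
    ← h _ (hA.inter hs) inter_subset_right, ENNReal.ofReal_toReal (measure_ne_top _ _)]

theorem setIntegral_eq_setIntegral_mul_of_toReal_eq_setIntegral (hs : MeasurableSet s)
    (hρ : IntegrableOn ρ s ν) (hρnn : ∀ x ∈ s, 0 ≤ ρ x)
    (h : ∀ A, MeasurableSet A → A ⊆ s → (μ A).toReal = ∫ x in A, ρ x ∂ν)
    (g : α → ℝ) {A : Set α} (hA : MeasurableSet A) (hAs : A ⊆ s) :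
    ∫ x in A, g x ∂μ = ∫ x in A, ρ x * g x ∂ν := by
  rw [← Measure.restrict_restrict_of_subset hAs,
    restrict_eq_withDensity_of_toReal_eq_setIntegral hs hρ hρnn h,
    setIntegral_withDensity_eq_setIntegral_toReal_smul₀ (f := fun x ↦ ENNReal.ofReal (ρ x))
      hρ.aestronglyMeasurable.aemeasurable.ennreal_ofReal.restrict
      (ae_of_all _ fun _ ↦ ENNReal.ofReal_lt_top) _ hA,
    Measure.restrict_restrict_of_subset hAs]
  refine setIntegral_congr_fun hA fun x hx ↦ ?_
  rw [ENNReal.toReal_ofReal (hρnn x (hAs hx)), smul_eq_mul]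

theorem eq_zero_of_toReal_eq_setIntegral_of_eqOn_zero (hs : MeasurableSet s) (hμs : μ sᶜ = 0)
    (h : (μ s).toReal = ∫ x in s, ρ x ∂ν) (hρ : EqOn ρ 0 s) : μ = 0 := by
  rw [setIntegral_congr_fun hs hρ, Pi.zero_def, integral_zero] at h
  rw [← Measure.restrict_eq_self_of_ae_mem (mem_ae_iff.2 hμs), Measure.restrict_eq_zero]
  exact ((ENNReal.toReal_eq_zero_iff _).1 h).resolve_right (measure_ne_top μ s)

end Density

section ContinuousOn

variable {X : Type*} [TopologicalSpace X] [MeasurableSpace X] {μ : Measure X}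
  [μ.IsOpenPosMeasure] {s : Set X} {f : X → ℝ}

theorem eqOn_zero_of_forall_setIntegral_eq_zero (hs : MeasurableSet s)
    (hsi : s ⊆ closure (interior s)) (hf : ContinuousOn f s) (hfi : IntegrableOn f s μ)
    (h : ∀ A, MeasurableSet A → A ⊆ s → ∫ x in A, f x ∂μ = 0) : EqOn f 0 s := by
  refine Measure.eqOn_of_ae_eq (μ := μ) (hfi.ae_eq_zero_of_forall_setIntegral_eq_zero
    fun A hA _ ↦ ?_) hf continuousOn_const hsi
  rw [Measure.restrict_restrict hA]
  exact h _ (hA.inter hs) inter_subset_right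

theorem eqOn_zero_of_setIntegral_eq_zero_of_nonneg (hs : MeasurableSet s)
    (hsi : s ⊆ closure (interior s)) (hf : ContinuousOn f s) (hfi : IntegrableOn f s μ)
    (hnn : ∀ x ∈ s, 0 ≤ f x) (h : ∫ x in s, f x ∂μ = 0) : EqOn f 0 s :=
  Measure.eqOn_of_ae_eq ((setIntegral_eq_zero_iff_of_nonneg_ae
    (ae_restrict_of_forall_mem hs hnn) hfi).1 h) hf continuousOn_const hsi

theorem setIntegral_pos_of_continuousOn_of_nonneg (hs : MeasurableSet s)
    (hsi : s ⊆ closure (interior s)) (hf : ContinuousOn f s) (hfi : IntegrableOn f s μ)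
    (hnn : ∀ x ∈ s, 0 ≤ f x) {x : X} (hx : x ∈ s) (hfx : 0 < f x) : 0 < ∫ x in s, f x ∂μ :=
  (setIntegral_nonneg hs hnn).lt_of_ne fun h ↦
    hfx.ne' (eqOn_zero_of_setIntegral_eq_zero_of_nonneg hs hsi hf hfi hnn h.symm hx)

end ContinuousOn

theorem continuousOn_setIntegral_of_continuousOn_prod {X Y : Type*} [TopologicalSpace X]
    [FirstCountableTopology X] [TopologicalSpace Y] [T2Space Y] [MeasurableSpace Y]
    [OpensMeasurableSpace Y]
    {μ : Measure Y} [IsFiniteMeasureOnCompacts μ] {F : Y → X → ℝ} {s : Set X} {t : Set Y}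
    (hs : IsCompact s) (ht : IsCompact t)
    (hF : ContinuousOn (Function.uncurry F) (t ×ˢ s)) :
    ContinuousOn (fun x ↦ ∫ y in t, F y x ∂μ) s := by
  obtain ⟨C, hC⟩ := (ht.prod hs).exists_bound_of_continuousOn hF
  refine continuousOn_of_dominated (bound := fun _ ↦ C)
    (fun x hx ↦ (hF.uncurry_right x hx).aestronglyMeasurable_of_isCompact ht
      ht.isClosed.measurableSet)
    (fun x hx ↦ ae_restrict_of_forall_mem ht.isClosed.measurableSet fun y hy ↦
      hC (y, x) (mk_mem_prod hy hx))
    (integrableOn_const ht.measure_ne_top)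
    (ae_restrict_of_forall_mem ht.isClosed.measurableSet fun y hy ↦ hF.uncurry_left y hy)

section Eigenmeasure

variable {d : ℕ} {S : Set (EuclideanSpace ℝ (Fin d))} {r u : EuclideanSpace ℝ (Fin d) → ℝ}
  {K : EuclideanSpace ℝ (Fin d) → EuclideanSpace ℝ (Fin d) → ℝ}

theorem continuousOn_mul_kernel (hu : ContinuousOn u S)
    (hK : ContinuousOn (Function.uncurry K) (S ×ˢ S)) :
    ContinuousOn (Function.uncurry fun y x ↦ u y * K y x) (S ×ˢ S) :=
  (hu.comp continuousOn_fst fun _ hq ↦ hq.1).mul hK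

theorem IsEigenmeasure.mul_add_setIntegral_mul_eq {lam : ℝ}
    {μ : Measure (EuclideanSpace ℝ (Fin d))} [IsFiniteMeasure μ]
    (hμ : IsEigenmeasure S r K lam μ) (hS : IsCompact S) (hSi : S ⊆ closure (interior S))
    (hr : ContinuousOn r S) (hK : ContinuousOn (Function.uncurry K) (S ×ˢ S))
    (hu : ContinuousOn u S) (hunn : ∀ x ∈ S, 0 ≤ u x)
    (hdens : ∀ A, MeasurableSet A → A ⊆ S → (μ A).toReal = ∫ x in A, u x) :
    ∀ x ∈ S, u x * r x + (∫ y in S, u y * K y x) = lam * u x := by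
  have hSm : MeasurableSet S := hS.isClosed.measurableSet
  have hdensity := setIntegral_eq_setIntegral_mul_of_toReal_eq_setIntegral hSm
    (hu.integrableOn_compact hS) hunn hdens
  have hJ : ContinuousOn (fun x ↦ ∫ y in S, u y * K y x) S :=
    continuousOn_setIntegral_of_continuousOn_prod hS hS (continuousOn_mul_kernel hu hK)
  have hF : ContinuousOn (fun x ↦ u x * r x + (∫ y in S, u y * K y x) - lam * u x) S :=
    ((hu.mul hr).add hJ).sub (continuousOn_const.mul hu)
  suffices hzero : EqOn (fun x ↦ u x * r x + (∫ y in S, u y * K y x) - lam * u x) 0 S from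
    fun x hx ↦ sub_eq_zero.1 (hzero hx)
  refine eqOn_zero_of_forall_setIntegral_eq_zero (μ := volume) hSm hSi hF
    (hF.integrableOn_compact hS) fun A hA hAS ↦ ?_
  have hint : ∀ {g : EuclideanSpace ℝ (Fin d) → ℝ}, ContinuousOn g S → IntegrableOn g A :=
    fun hg ↦ (hg.integrableOn_compact hS).mono_set hAS
  have hur : IntegrableOn (fun x ↦ u x * r x) A := hint (hu.mul hr)
  have heq := hμ A hA hAS
  rw [hdensity r hA hAS, hdens A hA hAS,
    setIntegral_congr_fun hA fun x _ ↦ hdensity (fun y ↦ K y x) hSm subset_rfl] at heq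
  rw [integral_sub (f := fun x ↦ u x * r x + ∫ y in S, u y * K y x) (hur.add (hint hJ))
    ((hint hu).const_mul lam), integral_add hur (hint hJ), integral_const_mul, heq, sub_self]

theorem eventually_eq_zero_of_setIntegral_mul_kernel_eq_zero (hS : IsCompact S)
    (hSi : S ⊆ closure (interior S)) (hu : ContinuousOn u S) (hunn : ∀ x ∈ S, 0 ≤ u x)
    (hK : ContinuousOn (Function.uncurry K) (S ×ˢ S)) (hKnn : ∀ x ∈ S, ∀ y ∈ S, 0 ≤ K x y)
    {x₀ : EuclideanSpace ℝ (Fin d)} (hx₀ : x₀ ∈ S) (hKpos : ∀ᶠ y in 𝓝[S] x₀, 0 < K y x₀)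
    (h : ∫ y in S, u y * K y x₀ = 0) : ∀ᶠ y in 𝓝[S] x₀, u y = 0 := by
  have hf := (continuousOn_mul_kernel hu hK).uncurry_right x₀ hx₀
  have hzero := eqOn_zero_of_setIntegral_eq_zero_of_nonneg hS.isClosed.measurableSet hSi hf
    (hf.integrableOn_compact hS) (fun y hy ↦ mul_nonneg (hunn y hy) (hKnn y hy x₀ hx₀)) h
  filter_upwards [hKpos, self_mem_nhdsWithin] with y hKy hy
  exact (mul_eq_zero.1 (hzero hy)).resolve_right hKy.ne'

end Eigenmeasure

theorem stmt6_general {d : ℕ}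
    (Ω S : Set (EuclideanSpace ℝ (Fin d)))
    (hΩopen : IsOpen Ω)
    (hΩconn : IsConnected Ω) (hSdef : S = closure Ω)
    (hScomp : IsCompact S)
    (r : EuclideanSpace ℝ (Fin d) → ℝ) (hr : ContinuousOn r S)
    (K : EuclideanSpace ℝ (Fin d) → EuclideanSpace ℝ (Fin d) → ℝ)
    (hK : ContinuousOn (fun q : EuclideanSpace ℝ (Fin d) × EuclideanSpace ℝ (Fin d) =>
      K q.1 q.2) (S ×ˢ S))
    (hKnn : ∀ x ∈ S, ∀ y ∈ S, 0 ≤ K x y)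
    (ε₀ c₀ : ℝ) (hε₀ : 0 < ε₀) (hc₀ : 0 < c₀)
    (hKlb : ∀ x ∈ S, ∀ y ∈ S, dist y x < ε₀ → c₀ < K x y)
    (μ : Measure (EuclideanSpace ℝ (Fin d))) [IsFiniteMeasure μ]
    (hμne : μ ≠ 0) (hμS : μ Sᶜ = 0)
    (lam : ℝ) (hμ : IsEigenmeasure S r K lam μ)
    (u : EuclideanSpace ℝ (Fin d) → ℝ) (hu : ContinuousOn u S)
    (hunn : ∀ x ∈ S, 0 ≤ u x)
    (hdens : ∀ A : Set (EuclideanSpace ℝ (Fin d)), MeasurableSet A → A ⊆ S →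
      (μ A).toReal = ∫ x in A, u x)
    (rbar : ℝ) (hrbar : IsGreatest (r '' S) rbar) :
    (∀ x ∈ S, 0 < u x) ∧ rbar < lam := by
  have hSm : MeasurableSet S := hScomp.isClosed.measurableSet
  have hSi : S ⊆ closure (interior S) := by
    rw [hSdef]
    exact closure_mono (interior_maximal subset_closure hΩopen)
  have heq := hμ.mul_add_setIntegral_mul_eq hScomp hSi hr hK hu hunn hdens
  have hKpos : ∀ x ∈ S, ∀ᶠ y in 𝓝[S] x, 0 < K y x := fun x hx ↦ by
    filter_upwards [inter_mem_nhdsWithin S (Metric.ball_mem_nhds x hε₀)] with y ⟨hy, hyx⟩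
    exact hc₀.trans (hKlb y hy x hx (by rwa [dist_comm]))
  have hupos : ∀ x ∈ S, 0 < u x := by
    by_contra! ⟨x₀, hx₀, hux₀⟩
    have hzero : EqOn u 0 S :=
      (hSdef ▸ hΩconn.closure.isPreconnected).eqOn_const_of_eventually_eq hu
        (fun x hx hux ↦ eventually_eq_zero_of_setIntegral_mul_kernel_eq_zero hScomp hSi hu hunn
          hK hKnn hx (hKpos x hx) (by simpa [show u x = 0 from hux] using heq x hx))
        hx₀ (le_antisymm hux₀ (hunn x₀ hx₀))
    exact hμne (eq_zero_of_toReal_eq_setIntegral_of_eqOn_zero hSm hμS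
      (hdens S hSm subset_rfl) hzero)
  refine ⟨hupos, ?_⟩
  obtain ⟨xs, hxs, rfl⟩ := hrbar.1
  have hf := (continuousOn_mul_kernel hu hK).uncurry_right xs hxs
  have hJpos : 0 < ∫ y in S, u y * K y xs :=
    setIntegral_pos_of_continuousOn_of_nonneg hSm hSi hf (hf.integrableOn_compact hScomp)
      (fun y hy ↦ mul_nonneg (hunn y hy) (hKnn y hy xs hxs)) hxs
      (mul_pos (hupos xs hxs) ((hKpos xs hxs).self_of_nhdsWithin hxs))
  nlinarith [heq xs hxs, hupos xs hxs]

/-- If a nonzero λ-eigenmeasure μ of r̃+J̃ is absolutely continuous with a continuous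
nonnegative density u, then u is strictly positive on S and λ > r̄ = max_S r. -/
theorem stmt6 {d : ℕ}
    (Ω S : Set (EuclideanSpace ℝ (Fin d)))
    (hΩne : Ω.Nonempty) (hΩopen : IsOpen Ω) (hΩbdd : Bornology.IsBounded Ω)
    (hΩconn : IsConnected Ω) (hSdef : S = closure Ω)
    (hScomp : IsCompact S) (hSvol : 0 < volume S)
    (r : EuclideanSpace ℝ (Fin d) → ℝ) (hr : ContinuousOn r S)
    (hrpos : ∀ x ∈ S, 0 < r x)
    (K : EuclideanSpace ℝ (Fin d) → EuclideanSpace ℝ (Fin d) → ℝ)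
    (hK : ContinuousOn (fun q : EuclideanSpace ℝ (Fin d) × EuclideanSpace ℝ (Fin d) =>
      K q.1 q.2) (S ×ˢ S))
    (hKnn : ∀ x ∈ S, ∀ y ∈ S, 0 ≤ K x y)
    (ε₀ c₀ : ℝ) (hε₀ : 0 < ε₀) (hc₀ : 0 < c₀)
    (hKlb : ∀ x ∈ S, ∀ y ∈ S, dist y x < ε₀ → c₀ < K x y)
    (μ : Measure (EuclideanSpace ℝ (Fin d))) [IsFiniteMeasure μ]
    (hμne : μ ≠ 0) (hμS : μ Sᶜ = 0)
    (lam : ℝ) (hμ : IsEigenmeasure S r K lam μ)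
    (u : EuclideanSpace ℝ (Fin d) → ℝ) (hu : ContinuousOn u S)
    (hunn : ∀ x ∈ S, 0 ≤ u x)
    (hdens : ∀ A : Set (EuclideanSpace ℝ (Fin d)), MeasurableSet A → A ⊆ S →
      (μ A).toReal = ∫ x in A, u x)
    (rbar : ℝ) (hrbar : IsGreatest (r '' S) rbar) :
    (∀ x ∈ S, 0 < u x) ∧ rbar < lam :=
  stmt6_general Ω S hΩopen hΩconn hSdef hScomp r hr K hK hKnn ε₀ c₀ hε₀ hc₀ hKlb μ hμne hμS lam hμ u
    hu hunn hdens rbar hrbar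
end

section
/- The family (r_λ, K_λ)_{λ>−D̲} satisfies: (i) for all −D̲ < λ₁ < λ₂ and all x, y ∈ S, r_{λ₁}(x) > r_{λ₂}(x) and K_{λ₁}(x,y) ≥ K_{λ₂}(x,y); (ii) for every λ₀ > −D̲, ‖r_λ − r_{λ₀}‖_∞ → 0 and ‖K_λ − K_{λ₀}‖_∞ → 0 as λ → λ₀; (iii) the map λ ↦ r̄_λ := max_{x∈S} r_λ(x) is continuous and strictly decreasing on (−D̲, +∞). -/
open MeasureTheory Filter Topology

/-- R_λ(x,a) = exp(−∫₀ᵃ D(x,α)dα − λa). -/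
noncomputable def Rfun {d : ℕ} (D : EuclideanSpace ℝ (Fin d) → ℝ → ℝ) (lam : ℝ)
    (x : EuclideanSpace ℝ (Fin d)) (a : ℝ) : ℝ :=
  Real.exp (-(∫ α in (0:ℝ)..a, D x α) - lam * a)

/-- r_λ(x) = (1−p)∫₀^∞ B(x,a)R_λ(x,a)da. -/
noncomputable def rfun {d : ℕ} (B D : EuclideanSpace ℝ (Fin d) → ℝ → ℝ) (p lam : ℝ)
    (x : EuclideanSpace ℝ (Fin d)) : ℝ :=
  (1 - p) * ∫ a in Set.Ioi (0:ℝ), B x a * Rfun D lam x a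

/-- K_λ(x,y) = p∫₀^∞ B(x,a)k(x,a,y)R_λ(x,a)da. -/
noncomputable def Kfun {d : ℕ} (B D : EuclideanSpace ℝ (Fin d) → ℝ → ℝ)
    (k : EuclideanSpace ℝ (Fin d) → ℝ → EuclideanSpace ℝ (Fin d) → ℝ) (p lam : ℝ)
    (x y : EuclideanSpace ℝ (Fin d)) : ℝ :=
  p * ∫ a in Set.Ioi (0:ℝ), B x a * k x a y * Rfun D lam x a

/-!
Since `R_λ(x,a) ≤ exp(-(D̲+λ)a)`, each weighted integral `∫₀^∞ w(a) R_λ(x,a) da` with a bounded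
weight `w ≥ 0` is antitone in `λ > -D̲`, strictly so when `w` is nonzero somewhere on `(0,∞)`; by
(A4) with `y = x` this is the case for `w = B(x,·)`. The bound `|eᵘ - eᵛ| ≤ |u - v| e^{max u v}`
makes these integrals Lipschitz in `λ` near `λ₀`, with constant `C/δ²`, `δ = (D̲+λ₀)/2`, coming
from `∫₀^∞ a e^{-δa} da` and independent of `x, y`: this is the uniform convergence. Finally
`r_λ` is continuous on the compact set `S`, so its maximum is attained, which makes `r̄` strictly
decreasing, and it moves by at most `‖r_λ - r_{λ₀}‖_∞`, which makes `r̄` continuous.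
-/

open Set Real

lemma Real.abs_exp_sub_exp_le (u v : ℝ) : |exp u - exp v| ≤ |u - v| * exp (max u v) := by
  have key : ∀ s t : ℝ, exp s - exp t ≤ |s - t| * exp (max s t) := fun s t => by
    have h : exp s * (t - s + 1) ≤ exp t := by
      calc exp s * (t - s + 1) ≤ exp s * exp (t - s) := by gcongr; exact add_one_le_exp _
        _ = exp t := by rw [← exp_add]; ring_nf
    calc exp s - exp t ≤ (s - t) * exp s := by linarith
      _ ≤ |s - t| * exp (max s t) := by gcongr; exacts [le_abs_self _, le_max_left _ _]
  exact abs_sub_le_iff.2 ⟨key u v, by rw [abs_sub_comm, max_comm]; exact key v u⟩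

lemma integral_mul_exp_neg_mul_Ioi {r : ℝ} (hr : 0 < r) :
    ∫ t in Ioi 0, t * exp (-(r * t)) = (r ^ 2)⁻¹ := by
  have h := integral_rpow_mul_exp_neg_mul_Ioi two_pos hr
  norm_num at h
  simpa using h

lemma integrableOn_mul_exp_neg_mul_Ioi {r : ℝ} (hr : 0 < r) :
    IntegrableOn (fun t => t * exp (-(r * t))) (Ioi 0) :=
  Integrable.of_integral_ne_zero (by rw [integral_mul_exp_neg_mul_Ioi hr]; positivity)

lemma continuousOn_intervalIntegral_Ici {f : ℝ → ℝ} (hf : ContinuousOn f (Ici 0)) :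
    ContinuousOn (fun a => ∫ t in 0..a, f t) (Ici 0) := by
  intro b hb
  have hsub : uIcc 0 (b + 1) = Ici 0 ∩ Iic (b + 1) := by
    rw [uIcc_of_le (by linarith [mem_Ici.1 hb]), Ici_inter_Iic]
  have hint : IntegrableOn f (uIcc 0 (b + 1)) := by
    rw [uIcc_of_le (by linarith [mem_Ici.1 hb])]
    exact (hf.mono Icc_subset_Ici_self).integrableOn_Icc
  refine (intervalIntegral.continuousOn_primitive_interval hint b ?_).mono_of_mem_nhdsWithin ?_
  · rw [hsub]; exact ⟨hb, by simp⟩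
  · rw [hsub]; exact inter_mem_nhdsWithin _ (Iic_mem_nhds (by linarith))

lemma continuousOn_intervalIntegral_of_continuousOn_prod {X : Type*} [TopologicalSpace X]
    {S : Set X} {f : X → ℝ → ℝ} {b : ℝ} (hb : 0 ≤ b)
    (hf : ContinuousOn (fun q : X × ℝ => f q.1 q.2) (S ×ˢ Icc 0 b)) :
    ContinuousOn (fun x => ∫ t in 0..b, f x t) S := by
  rw [continuousOn_iff_continuous_domRestrict]
  -- freezing `t` at the endpoints outside `[0, b]` makes the integrand continuous on `S × ℝ`
  have hg : Continuous (Function.uncurry fun (x : S) (t : ℝ) => f x (projIcc 0 b hb t)) :=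
    hf.comp_continuous (f := fun q : S × ℝ => ((q.1 : X), (projIcc 0 b hb q.2 : ℝ)))
      (by fun_prop) fun q => ⟨q.1.2, Subtype.prop _⟩
  convert intervalIntegral.continuous_parametric_intervalIntegral_of_continuous'
    (μ := volume) hg 0 b using 2 with x
  refine intervalIntegral.integral_congr fun t ht => ?_
  rw [uIcc_of_le hb] at ht
  simp [projIcc_of_mem hb ht]

lemma exists_pos_ne_zero_of_subset_tsupport {f : ℝ → ℝ} {I : Set ℝ} (hI : I ⊆ Ici 0)
    (hIint : (interior I).Nonempty) (hIf : I ⊆ tsupport f) : ∃ a > 0, f a ≠ 0 := by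
  obtain ⟨a₀, ha₀⟩ := hIint
  have ha₀pos : 0 < a₀ := by simpa using interior_mono hI ha₀
  obtain ⟨a, ha, hfa⟩ := mem_closure_iff.1 (hIf (interior_subset ha₀)) (Ioi 0) isOpen_Ioi ha₀pos
  exact ⟨a, ha, hfa⟩

section Survival

variable {d : ℕ} {D : EuclideanSpace ℝ (Fin d) → ℝ → ℝ} {x : EuclideanSpace ℝ (Fin d)}
  {c lam lam₀ lam₁ lam₂ a : ℝ}

lemma Rfun_pos : 0 < Rfun D lam x a := exp_pos _

lemma Rfun_le_Rfun (h : lam₁ ≤ lam₂) (ha : 0 ≤ a) : Rfun D lam₂ x a ≤ Rfun D lam₁ x a :=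
  exp_le_exp.2 (by nlinarith)

lemma Rfun_lt_Rfun (h : lam₁ < lam₂) (ha : 0 < a) : Rfun D lam₂ x a < Rfun D lam₁ x a :=
  exp_lt_exp.2 (by nlinarith)

lemma continuousOn_Rfun (hD : ContinuousOn (D x) (Ici 0)) : ContinuousOn (Rfun D lam x) (Ici 0) :=
  continuous_exp.comp_continuousOn
    ((continuousOn_intervalIntegral_Ici hD).neg.sub (by fun_prop))

lemma mul_le_intervalIntegral (hD : ContinuousOn (D x) (Ici 0)) (hDlb : ∀ a ∈ Ici 0, c ≤ D x a)
    (ha : 0 ≤ a) : c * a ≤ ∫ t in 0..a, D x t := by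
  have h := intervalIntegral.integral_mono_on ha (intervalIntegrable_const (μ := volume))
    ((hD.mono (uIcc_of_le ha ▸ Icc_subset_Ici_self)).intervalIntegrable) fun t ht => hDlb t ht.1
  simpa [mul_comm] using h

lemma Rfun_le_exp (hD : ContinuousOn (D x) (Ici 0)) (hDlb : ∀ a ∈ Ici 0, c ≤ D x a)
    (ha : 0 ≤ a) : Rfun D lam x a ≤ exp (-(c + lam) * a) :=
  exp_le_exp.2 (by nlinarith [mul_le_intervalIntegral hD hDlb ha])

lemma abs_Rfun_sub_le (hD : ContinuousOn (D x) (Ici 0)) (hDlb : ∀ a ∈ Ici 0, c ≤ D x a)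
    (hlam : |lam - lam₀| ≤ (c + lam₀) / 2) (ha : 0 ≤ a) :
    |Rfun D lam x a - Rfun D lam₀ x a|
      ≤ |lam - lam₀| * (a * exp (-((c + lam₀) / 2 * a))) := by
  set Φ := ∫ t in 0..a, D x t
  have hΦ : c * a ≤ Φ := mul_le_intervalIntegral hD hDlb ha
  have hdiff : |(-Φ - lam * a) - (-Φ - lam₀ * a)| = |lam - lam₀| * a := by
    rw [show -Φ - lam * a - (-Φ - lam₀ * a) = -((lam - lam₀) * a) by ring, abs_neg, abs_mul,
      abs_of_nonneg ha]
  have hmax : max (-Φ - lam * a) (-Φ - lam₀ * a) ≤ -((c + lam₀) / 2 * a) := by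
    have h₁ := mul_le_mul_of_nonneg_right hlam ha
    have h₂ := mul_le_mul_of_nonneg_right (neg_abs_le (lam - lam₀)) ha
    have h₃ := mul_nonneg (abs_nonneg (lam - lam₀)) ha
    exact max_le (by linarith) (by linarith)
  calc |Rfun D lam x a - Rfun D lam₀ x a|
      ≤ |lam - lam₀| * a * exp (max (-Φ - lam * a) (-Φ - lam₀ * a)) :=
        hdiff ▸ abs_exp_sub_exp_le _ _
    _ ≤ |lam - lam₀| * a * exp (-((c + lam₀) / 2 * a)) := by gcongr
    _ = _ := by ring

end Survival

section WeightedIntegral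

variable {d : ℕ} {D : EuclideanSpace ℝ (Fin d) → ℝ → ℝ} {x : EuclideanSpace ℝ (Fin d)}
  {w : ℝ → ℝ} {c C lam lam₀ lam₁ lam₂ : ℝ}

lemma abs_mul_Rfun_le (hD : ContinuousOn (D x) (Ici 0)) (hDlb : ∀ a ∈ Ici 0, c ≤ D x a)
    {a : ℝ} (ha : 0 ≤ a) (hwC : |w a| ≤ C) :
    |w a * Rfun D lam x a| ≤ C * exp (-(c + lam) * a) := by
  rw [abs_mul, abs_of_pos Rfun_pos]
  exact mul_le_mul hwC (Rfun_le_exp hD hDlb ha) Rfun_pos.le ((abs_nonneg _).trans hwC)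

lemma integrableOn_mul_Rfun (hD : ContinuousOn (D x) (Ici 0)) (hDlb : ∀ a ∈ Ici 0, c ≤ D x a)
    (hw : ContinuousOn w (Ici 0)) (hwC : ∀ a ∈ Ici 0, |w a| ≤ C) (hlam : 0 < c + lam) :
    IntegrableOn (fun a => w a * Rfun D lam x a) (Ioi 0) :=
  Integrable.mono' ((exp_neg_integrableOn_Ioi 0 hlam).const_mul C)
    (((hw.mul (continuousOn_Rfun hD)).mono Ioi_subset_Ici_self).aestronglyMeasurable
      measurableSet_Ioi)
    ((ae_restrict_iff' measurableSet_Ioi).2 (.of_forall fun a ha =>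
      abs_mul_Rfun_le hD hDlb (le_of_lt ha) (hwC a (Ioi_subset_Ici_self ha))))

lemma setIntegral_mul_Rfun_le (hD : ContinuousOn (D x) (Ici 0)) (hDlb : ∀ a ∈ Ici 0, c ≤ D x a)
    (hw : ContinuousOn w (Ici 0)) (hw0 : ∀ a ∈ Ici 0, 0 ≤ w a) (hwC : ∀ a ∈ Ici 0, |w a| ≤ C)
    (hlam₁ : 0 < c + lam₁) (h : lam₁ ≤ lam₂) :
    ∫ a in Ioi 0, w a * Rfun D lam₂ x a ≤ ∫ a in Ioi 0, w a * Rfun D lam₁ x a :=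
  setIntegral_mono_on (integrableOn_mul_Rfun hD hDlb hw hwC (by linarith))
    (integrableOn_mul_Rfun hD hDlb hw hwC hlam₁) measurableSet_Ioi fun a ha =>
      mul_le_mul_of_nonneg_left (Rfun_le_Rfun h (le_of_lt ha)) (hw0 a (Ioi_subset_Ici_self ha))

lemma setIntegral_mul_Rfun_lt (hD : ContinuousOn (D x) (Ici 0)) (hDlb : ∀ a ∈ Ici 0, c ≤ D x a)
    (hw : ContinuousOn w (Ici 0)) (hw0 : ∀ a ∈ Ici 0, 0 ≤ w a) (hwC : ∀ a ∈ Ici 0, |w a| ≤ C)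
    {a₁ : ℝ} (ha₁ : 0 < a₁) (hwa₁ : w a₁ ≠ 0) (hlam₁ : 0 < c + lam₁) (h : lam₁ < lam₂) :
    ∫ a in Ioi 0, w a * Rfun D lam₂ x a < ∫ a in Ioi 0, w a * Rfun D lam₁ x a := by
  have hi₁ := integrableOn_mul_Rfun hD hDlb hw hwC hlam₁
  have hi₂ := integrableOn_mul_Rfun (lam := lam₂) hD hDlb hw hwC (by linarith)
  rw [← sub_pos, ← integral_sub hi₁ hi₂]
  refine (setIntegral_pos_iff_support_of_nonneg_ae ?_ (hi₁.sub hi₂)).2 ?_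
  · refine (ae_restrict_iff' measurableSet_Ioi).2 (.of_forall fun a ha => ?_)
    exact sub_nonneg.2 (mul_le_mul_of_nonneg_left (Rfun_le_Rfun h.le (le_of_lt ha))
      (hw0 a (Ioi_subset_Ici_self ha)))
  · -- on `Ioi 0` the factor `R_{λ₁} - R_{λ₂}` is positive, so the support is that of `w`
    have hsupp : Function.support w ∩ Ioi 0 ⊆
        Function.support (fun a => w a * Rfun D lam₁ x a - w a * Rfun D lam₂ x a) ∩ Ioi 0 :=
      fun a ⟨hwa, ha⟩ =>
        ⟨by simpa [← mul_sub] using ⟨hwa, sub_ne_zero.2 (Rfun_lt_Rfun h ha).ne'⟩, ha⟩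
    refine (Measure.measure_pos_of_mem_nhds (μ := volume)
      (inter_mem ?_ (Ioi_mem_nhds ha₁))).trans_le (measure_mono hsupp)
    exact ((hw a₁ ha₁.le).continuousAt (Ici_mem_nhds ha₁)).eventually_ne hwa₁

lemma abs_setIntegral_mul_Rfun_sub_le (hD : ContinuousOn (D x) (Ici 0))
    (hDlb : ∀ a ∈ Ici 0, c ≤ D x a) (hw : ContinuousOn w (Ici 0)) (hwC : ∀ a ∈ Ici 0, |w a| ≤ C)
    (hlam₀ : 0 < c + lam₀) (hlam : |lam - lam₀| ≤ (c + lam₀) / 2) :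
    |(∫ a in Ioi 0, w a * Rfun D lam x a) - ∫ a in Ioi 0, w a * Rfun D lam₀ x a|
      ≤ C * ((c + lam₀) / 2)⁻¹ ^ 2 * |lam - lam₀| := by
  have hδ : 0 < (c + lam₀) / 2 := by linarith
  have hlam' : 0 < c + lam := by linarith [neg_abs_le (lam - lam₀)]
  rw [← integral_sub (integrableOn_mul_Rfun hD hDlb hw hwC hlam')
    (integrableOn_mul_Rfun hD hDlb hw hwC hlam₀)]
  calc |∫ a in Ioi 0, (w a * Rfun D lam x a - w a * Rfun D lam₀ x a)|
      ≤ ∫ a in Ioi 0, C * |lam - lam₀| * (a * exp (-((c + lam₀) / 2 * a))) := by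
        rw [← Real.norm_eq_abs]
        refine norm_integral_le_of_norm_le
          ((integrableOn_mul_exp_neg_mul_Ioi hδ).const_mul (C * |lam - lam₀|))
          ((ae_restrict_iff' measurableSet_Ioi).2 (.of_forall fun a ha => ?_))
        rw [Real.norm_eq_abs, ← mul_sub, abs_mul, mul_assoc]
        exact mul_le_mul (hwC a (Ioi_subset_Ici_self ha))
          (abs_Rfun_sub_le hD hDlb hlam (le_of_lt ha))
          (abs_nonneg _) ((abs_nonneg _).trans (hwC a (Ioi_subset_Ici_self ha)))
    _ = C * ((c + lam₀) / 2)⁻¹ ^ 2 * |lam - lam₀| := by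
        rw [integral_const_mul, integral_mul_exp_neg_mul_Ioi hδ, inv_pow]; ring

end WeightedIntegral

section Supremum

variable {X Y : Type*} [TopologicalSpace X] {S : Set X}

lemma abs_ciSup_sub_ciSup_le {ι : Type*} {f g : ι → ℝ} (hf : BddAbove (range f))
    (hg : BddAbove (range g)) (hfg : BddAbove (range fun i => |f i - g i|)) :
    |(⨆ i, f i) - ⨆ i, g i| ≤ ⨆ i, |f i - g i| := by
  rcases isEmpty_or_nonempty ι with hι | hι
  · simp
  have key : ∀ f g : ι → ℝ, BddAbove (range g) → BddAbove (range fun i => |f i - g i|) →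
      ⨆ i, f i ≤ (⨆ i, g i) + ⨆ i, |f i - g i| := by
    refine fun f g hg hfg => ciSup_le fun i => ?_
    linarith [le_ciSup hg i, le_ciSup hfg i, le_abs_self (f i - g i)]
  have h₁ := key f g hg hfg
  have h₂ := key g f hf (by simpa only [abs_sub_comm] using hfg)
  simp only [abs_sub_comm (g _)] at h₂
  exact abs_sub_le_iff.2 ⟨by linarith, by linarith⟩

lemma IsCompact.bddAbove_range_of_continuousOn (hS : IsCompact S) {g : X → ℝ}
    (hg : ContinuousOn g S) : BddAbove (range fun x : S => g x) :=
  image_eq_range g S ▸ hS.bddAbove_image hg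

lemma continuousOn_iSup_of_tendsto_iSup_abs_sub [TopologicalSpace Y] (hS : IsCompact S)
    {F : Y → X → ℝ} {T : Set Y} (hF : ∀ l ∈ T, ContinuousOn (F l) S)
    (h : ∀ l₀ ∈ T, Tendsto (fun l => ⨆ x : S, |F l x - F l₀ x|) (𝓝[T] l₀) (𝓝 0)) :
    ContinuousOn (fun l => ⨆ x : S, F l x) T := by
  intro l₀ hl₀
  refine tendsto_sub_nhds_zero_iff.1 (squeeze_zero_norm' ?_ (h l₀ hl₀))
  filter_upwards [self_mem_nhdsWithin] with l hl
  exact abs_ciSup_sub_ciSup_le (hS.bddAbove_range_of_continuousOn (hF l hl))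
    (hS.bddAbove_range_of_continuousOn (hF l₀ hl₀))
    (hS.bddAbove_range_of_continuousOn ((hF l hl).sub (hF l₀ hl₀)).abs)

lemma strictAntiOn_iSup_of_isCompact [Preorder Y] (hS : IsCompact S) (hne : S.Nonempty)
    {F : Y → X → ℝ} {T : Set Y} (hF : ∀ l ∈ T, ContinuousOn (F l) S)
    (h : ∀ x ∈ S, StrictAntiOn (F · x) T) : StrictAntiOn (fun l => ⨆ x : S, F l x) T := by
  intro l₁ hl₁ l₂ hl₂ hl
  have : Nonempty S := hne.to_subtype
  obtain ⟨x₂, hx₂, hmax⟩ := hS.exists_isMaxOn hne (hF l₂ hl₂)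
  calc ⨆ x : S, F l₂ x ≤ F l₂ x₂ := ciSup_le fun x => hmax x.2
    _ < F l₁ x₂ := h x₂ hx₂ hl₁ hl₂ hl
    _ ≤ ⨆ x : S, F l₁ x :=
      le_ciSup (f := fun x : S => F l₁ x) (hS.bddAbove_range_of_continuousOn (hF l₁ hl₁))
        ⟨x₂, hx₂⟩

end Supremum

lemma tendsto_nhds_zero_of_le_mul_abs_sub {g : ℝ → ℝ} {l₀ M : ℝ} (hg0 : ∀ l, 0 ≤ g l)
    (hg : ∀ᶠ l in 𝓝 l₀, g l ≤ M * |l - l₀|) : Tendsto g (𝓝 l₀) (𝓝 0) := by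
  refine squeeze_zero' (.of_forall hg0) hg ?_
  simpa using (Continuous.tendsto (f := fun l => M * |l - l₀|) (by fun_prop) l₀)

section Family

variable {d : ℕ} {S : Set (EuclideanSpace ℝ (Fin d))} {B D : EuclideanSpace ℝ (Fin d) → ℝ → ℝ}
  {k : EuclideanSpace ℝ (Fin d) → ℝ → EuclideanSpace ℝ (Fin d) → ℝ} {x y : EuclideanSpace ℝ (Fin d)}
  {p c C lam lam₀ : ℝ}

lemma rfun_strictAntiOn (hp : p < 1) (hD : ContinuousOn (D x) (Ici 0))
    (hDlb : ∀ a ∈ Ici 0, c ≤ D x a) (hB : ContinuousOn (B x) (Ici 0))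
    (hB0 : ∀ a ∈ Ici 0, 0 ≤ B x a) (hBC : ∀ a ∈ Ici 0, |B x a| ≤ C)
    (hBpos : ∃ a > 0, B x a ≠ 0) : StrictAntiOn (fun lam => rfun B D p lam x) (Ioi (-c)) := by
  intro lam₁ hlam₁ lam₂ _ h
  obtain ⟨a₁, ha₁, hBa₁⟩ := hBpos
  exact mul_lt_mul_of_pos_left (setIntegral_mul_Rfun_lt hD hDlb hB hB0 hBC ha₁ hBa₁
    (neg_lt_iff_pos_add'.1 hlam₁) h) (sub_pos.2 hp)

lemma Kfun_antitoneOn (hp : 0 ≤ p) (hD : ContinuousOn (D x) (Ici 0))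
    (hDlb : ∀ a ∈ Ici 0, c ≤ D x a) (hBk : ContinuousOn (fun a => B x a * k x a y) (Ici 0))
    (hBk0 : ∀ a ∈ Ici 0, 0 ≤ B x a * k x a y) (hBkC : ∀ a ∈ Ici 0, |B x a * k x a y| ≤ C) :
    AntitoneOn (fun lam => Kfun B D k p lam x y) (Ioi (-c)) := fun _ hlam₁ _ _ h =>
  mul_le_mul_of_nonneg_left (setIntegral_mul_Rfun_le hD hDlb hBk hBk0 hBkC
    (neg_lt_iff_pos_add'.1 hlam₁) h) hp

lemma continuousOn_Rfun_space
    (hD : ContinuousOn (fun q : EuclideanSpace ℝ (Fin d) × ℝ => D q.1 q.2) (S ×ˢ Ici 0))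
    {a : ℝ} (ha : 0 ≤ a) : ContinuousOn (fun x => Rfun D lam x a) S :=
  continuous_exp.comp_continuousOn
    ((continuousOn_intervalIntegral_of_continuousOn_prod ha
      (hD.mono (prod_mono subset_rfl Icc_subset_Ici_self))).neg.sub continuousOn_const)

lemma continuousOn_rfun
    (hB : ContinuousOn (fun q : EuclideanSpace ℝ (Fin d) × ℝ => B q.1 q.2) (S ×ˢ Ici 0))
    (hBC : ∀ x ∈ S, ∀ a ∈ Ici (0:ℝ), |B x a| ≤ C)
    (hD : ContinuousOn (fun q : EuclideanSpace ℝ (Fin d) × ℝ => D q.1 q.2) (S ×ˢ Ici 0))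
    (hDlb : ∀ x ∈ S, ∀ a ∈ Ici (0:ℝ), c ≤ D x a) (hlam : -c < lam) :
    ContinuousOn (rfun B D p lam) S :=
  have hlam' : 0 < c + lam := neg_lt_iff_pos_add'.1 hlam
  continuousOn_const.mul <| continuousOn_of_dominated
    (fun x hx => (integrableOn_mul_Rfun (hD.uncurry_left x hx) (hDlb x hx) (hB.uncurry_left x hx)
      (hBC x hx) hlam').aestronglyMeasurable)
    (fun x hx => (ae_restrict_iff' measurableSet_Ioi).2 (.of_forall fun a ha =>
      abs_mul_Rfun_le (hD.uncurry_left x hx) (hDlb x hx) (le_of_lt ha)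
        (hBC x hx a (Ioi_subset_Ici_self ha))))
    ((exp_neg_integrableOn_Ioi 0 hlam').const_mul C)
    ((ae_restrict_iff' measurableSet_Ioi).2 (.of_forall fun a ha =>
      (hB.uncurry_right a (Ioi_subset_Ici_self ha)).mul (continuousOn_Rfun_space hD (le_of_lt ha))))

lemma tendsto_iSup_abs_rfun_sub (hp : p ≤ 1) (hC : 0 ≤ C)
    (hD : ∀ x ∈ S, ContinuousOn (D x) (Ici 0)) (hDlb : ∀ x ∈ S, ∀ a ∈ Ici (0:ℝ), c ≤ D x a)
    (hB : ∀ x ∈ S, ContinuousOn (B x) (Ici 0)) (hBC : ∀ x ∈ S, ∀ a ∈ Ici (0:ℝ), |B x a| ≤ C)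
    (hlam₀ : -c < lam₀) :
    Tendsto (fun lam => ⨆ x : S, |rfun B D p lam x - rfun B D p lam₀ x|) (𝓝 lam₀) (𝓝 0) := by
  have hlam₀' : 0 < c + lam₀ := neg_lt_iff_pos_add'.1 hlam₀
  have hp' : 0 ≤ 1 - p := sub_nonneg.2 hp
  refine tendsto_nhds_zero_of_le_mul_abs_sub (M := (1 - p) * (C * ((c + lam₀) / 2)⁻¹ ^ 2))
    (fun _ => Real.iSup_nonneg fun _ => abs_nonneg _) ?_
  filter_upwards [eventually_abs_sub_lt lam₀ (half_pos hlam₀')] with lam hlam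
  refine Real.iSup_le (fun x => ?_) (by positivity)
  rw [rfun, rfun, ← mul_sub, abs_mul, abs_of_nonneg hp', mul_assoc]
  exact mul_le_mul_of_nonneg_left (abs_setIntegral_mul_Rfun_sub_le (hD x x.2) (hDlb x x.2)
    (hB x x.2) (hBC x x.2) hlam₀' hlam.le) hp'

lemma tendsto_iSup_iSup_abs_Kfun_sub (hp : 0 ≤ p) (hC : 0 ≤ C)
    (hD : ∀ x ∈ S, ContinuousOn (D x) (Ici 0)) (hDlb : ∀ x ∈ S, ∀ a ∈ Ici (0:ℝ), c ≤ D x a)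
    (hBk : ∀ x ∈ S, ∀ y ∈ S, ContinuousOn (fun a => B x a * k x a y) (Ici 0))
    (hBkC : ∀ x ∈ S, ∀ y ∈ S, ∀ a ∈ Ici (0:ℝ), |B x a * k x a y| ≤ C) (hlam₀ : -c < lam₀) :
    Tendsto (fun lam => ⨆ x : S, ⨆ y : S, |Kfun B D k p lam x y - Kfun B D k p lam₀ x y|)
      (𝓝 lam₀) (𝓝 0) := by
  have hlam₀' : 0 < c + lam₀ := neg_lt_iff_pos_add'.1 hlam₀
  refine tendsto_nhds_zero_of_le_mul_abs_sub (M := p * (C * ((c + lam₀) / 2)⁻¹ ^ 2))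
    (fun _ => Real.iSup_nonneg fun _ => Real.iSup_nonneg fun _ => abs_nonneg _) ?_
  filter_upwards [eventually_abs_sub_lt lam₀ (half_pos hlam₀')] with lam hlam
  refine Real.iSup_le (fun x => Real.iSup_le (fun y => ?_) (by positivity)) (by positivity)
  rw [Kfun, Kfun, ← mul_sub, abs_mul, abs_of_nonneg hp, mul_assoc]
  exact mul_le_mul_of_nonneg_left (abs_setIntegral_mul_Rfun_sub_le (hD x x.2) (hDlb x x.2)
    (hBk x x.2 y y.2) (hBkC x x.2 y y.2) hlam₀' hlam.le) hp

end Family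

theorem stmt13_general {d : ℕ}
    (Ω S : Set (EuclideanSpace ℝ (Fin d)))
    (hΩne : Ω.Nonempty) (hSdef : S = closure Ω) (hScomp : IsCompact S)
    (B D : EuclideanSpace ℝ (Fin d) → ℝ → ℝ)
    (hBcont : ContinuousOn (fun q : EuclideanSpace ℝ (Fin d) × ℝ => B q.1 q.2)
      (S ×ˢ Set.Ici 0))
    (hBbd : ∃ C, ∀ x ∈ S, ∀ a ∈ Set.Ici (0:ℝ), B x a ≤ C)
    (hBnn : ∀ x ∈ S, ∀ a ∈ Set.Ici (0:ℝ), 0 ≤ B x a)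
    (Dlow : ℝ)
    (hDcont : ContinuousOn (fun q : EuclideanSpace ℝ (Fin d) × ℝ => D q.1 q.2)
      (S ×ˢ Set.Ici 0))
    (hDlb : ∀ x ∈ S, ∀ a ∈ Set.Ici (0:ℝ), Dlow ≤ D x a)
    (k : EuclideanSpace ℝ (Fin d) → ℝ → EuclideanSpace ℝ (Fin d) → ℝ)
    (hkcont : ContinuousOn
      (fun q : EuclideanSpace ℝ (Fin d) × ℝ × EuclideanSpace ℝ (Fin d) => k q.1 q.2.1 q.2.2)
      (S ×ˢ (Set.Ici 0 ×ˢ S)))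
    (hkbd : ∃ C, ∀ x ∈ S, ∀ a ∈ Set.Ici (0:ℝ), ∀ y ∈ S, k x a y ≤ C)
    (hknn : ∀ x ∈ S, ∀ a ∈ Set.Ici (0:ℝ), ∀ y ∈ S, 0 ≤ k x a y)
    (p : ℝ) (hp : p ∈ Set.Ioo (0:ℝ) 1)
    (ε₀ : ℝ) (hε₀ : 0 < ε₀) (I : Set ℝ) (hI : I ⊆ Set.Ici 0)
    (hIint : (interior I).Nonempty)
    (hA4 : ∀ x ∈ S, ∀ y ∈ S, dist y x < ε₀ →
      I ⊆ tsupport (fun a => k x a y) ∩ tsupport (fun a => B x a))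
    :
    (∀ lam₁ lam₂ : ℝ, -Dlow < lam₁ → lam₁ < lam₂ → ∀ x ∈ S, ∀ y ∈ S,
      rfun B D p lam₂ x < rfun B D p lam₁ x ∧
      Kfun B D k p lam₂ x y ≤ Kfun B D k p lam₁ x y) ∧
    (∀ lam₀ : ℝ, -Dlow < lam₀ →
      Tendsto (fun lam => ⨆ x : S, |rfun B D p lam (x : EuclideanSpace ℝ (Fin d)) -
          rfun B D p lam₀ (x : EuclideanSpace ℝ (Fin d))|)
        (𝓝[Set.Ioi (-Dlow)] lam₀) (𝓝 0) ∧
      Tendsto (fun lam => ⨆ x : S, ⨆ y : S,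
          |Kfun B D k p lam (x : EuclideanSpace ℝ (Fin d)) (y : EuclideanSpace ℝ (Fin d)) -
            Kfun B D k p lam₀ (x : EuclideanSpace ℝ (Fin d)) (y : EuclideanSpace ℝ (Fin d))|)
        (𝓝[Set.Ioi (-Dlow)] lam₀) (𝓝 0)) ∧
    (ContinuousOn (fun lam => ⨆ x : S, rfun B D p lam (x : EuclideanSpace ℝ (Fin d)))
      (Set.Ioi (-Dlow)) ∧
    StrictAntiOn (fun lam => ⨆ x : S, rfun B D p lam (x : EuclideanSpace ℝ (Fin d)))
      (Set.Ioi (-Dlow))) := by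
  obtain ⟨x₀, hx₀⟩ : S.Nonempty := hSdef ▸ hΩne.closure
  obtain ⟨CB, hCB⟩ := hBbd
  obtain ⟨Ck, hCk⟩ := hkbd
  have hCB0 : 0 ≤ CB := (hBnn x₀ hx₀ 0 self_mem_Ici).trans (hCB x₀ hx₀ 0 self_mem_Ici)
  have hCk0 : 0 ≤ Ck := (hknn x₀ hx₀ 0 self_mem_Ici x₀ hx₀).trans (hCk x₀ hx₀ 0 self_mem_Ici x₀ hx₀)
  have hD x (hx : x ∈ S) : ContinuousOn (D x) (Ici 0) := hDcont.uncurry_left x hx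
  have hB x (hx : x ∈ S) : ContinuousOn (B x) (Ici 0) := hBcont.uncurry_left x hx
  have hBk x (hx : x ∈ S) y (hy : y ∈ S) : ContinuousOn (fun a => B x a * k x a y) (Ici 0) :=
    (hB x hx).mul (hkcont.comp (f := fun a : ℝ => (x, a, y)) (by fun_prop) fun a ha => ⟨hx, ha, hy⟩)
  have hBC x (hx : x ∈ S) a (ha : a ∈ Ici (0:ℝ)) : |B x a| ≤ CB :=
    (abs_of_nonneg (hBnn x hx a ha)).trans_le (hCB x hx a ha)
  have hBk0 x (hx : x ∈ S) y (hy : y ∈ S) a (ha : a ∈ Ici (0:ℝ)) : 0 ≤ B x a * k x a y :=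
    mul_nonneg (hBnn x hx a ha) (hknn x hx a ha y hy)
  have hBkC x (hx : x ∈ S) y (hy : y ∈ S) a (ha : a ∈ Ici (0:ℝ)) : |B x a * k x a y| ≤ CB * Ck :=
    (abs_of_nonneg (hBk0 x hx y hy a ha)).trans_le
      (mul_le_mul (hCB x hx a ha) (hCk x hx a ha y hy) (hknn x hx a ha y hy) hCB0)
  have hr_anti x (hx : x ∈ S) := rfun_strictAntiOn hp.2 (hD x hx) (hDlb x hx) (hB x hx)
    (hBnn x hx) (hBC x hx) (exists_pos_ne_zero_of_subset_tsupport hI hIint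
      fun a ha => (hA4 x hx x hx (by simpa using hε₀) ha).2)
  have hr_cont lam (hlam : lam ∈ Ioi (-Dlow)) :=
    continuousOn_rfun (p := p) hBcont hBC hDcont hDlb hlam
  have hr_unif lam₀ (hlam₀ : lam₀ ∈ Ioi (-Dlow)) :=
    (tendsto_iSup_abs_rfun_sub hp.2.le hCB0 hD hDlb hB hBC hlam₀).mono_left
      (nhdsWithin_le_nhds (s := Ioi (-Dlow)))
  refine ⟨fun lam₁ lam₂ h₁ h₁₂ x hx y hy => ⟨hr_anti x hx h₁ (h₁.trans h₁₂) h₁₂, ?_⟩,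
    fun lam₀ hlam₀ => ⟨hr_unif lam₀ hlam₀, ?_⟩,
    continuousOn_iSup_of_tendsto_iSup_abs_sub hScomp hr_cont hr_unif,
    strictAntiOn_iSup_of_isCompact hScomp ⟨x₀, hx₀⟩ hr_cont hr_anti⟩
  · exact Kfun_antitoneOn hp.1.le (hD x hx) (hDlb x hx) (hBk x hx y hy) (hBk0 x hx y hy)
      (hBkC x hx y hy) h₁ (h₁.trans h₁₂) h₁₂.le
  · exact (tendsto_iSup_iSup_abs_Kfun_sub hp.1.le (mul_nonneg hCB0 hCk0) hD hDlb hBk hBkC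
      hlam₀).mono_left nhdsWithin_le_nhds

/-- Monotonicity and continuity of the family (r_λ, K_λ): (i) strict/weak monotonicity in λ,
(ii) uniform convergence as λ → λ₀, (iii) λ ↦ r̄_λ = max_S r_λ is continuous and strictly
decreasing on (−D̲, ∞). -/
theorem stmt13 {d : ℕ}
    (Ω S : Set (EuclideanSpace ℝ (Fin d)))
    (hΩne : Ω.Nonempty) (hΩopen : IsOpen Ω) (hΩbdd : Bornology.IsBounded Ω)
    (hΩconn : IsConnected Ω) (hSdef : S = closure Ω) (hScomp : IsCompact S)
    (B D : EuclideanSpace ℝ (Fin d) → ℝ → ℝ)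
    (hBcont : ContinuousOn (fun q : EuclideanSpace ℝ (Fin d) × ℝ => B q.1 q.2)
      (S ×ˢ Set.Ici 0))
    (hBbd : ∃ C, ∀ x ∈ S, ∀ a ∈ Set.Ici (0:ℝ), B x a ≤ C)
    (hBnn : ∀ x ∈ S, ∀ a ∈ Set.Ici (0:ℝ), 0 ≤ B x a)
    (Dlow : ℝ) (hDlow : 0 < Dlow)
    (hDcont : ContinuousOn (fun q : EuclideanSpace ℝ (Fin d) × ℝ => D q.1 q.2)
      (S ×ˢ Set.Ici 0))
    (hDbd : ∃ C, ∀ x ∈ S, ∀ a ∈ Set.Ici (0:ℝ), D x a ≤ C)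
    (hDlb : ∀ x ∈ S, ∀ a ∈ Set.Ici (0:ℝ), Dlow ≤ D x a)
    (k : EuclideanSpace ℝ (Fin d) → ℝ → EuclideanSpace ℝ (Fin d) → ℝ)
    (hkcont : ContinuousOn
      (fun q : EuclideanSpace ℝ (Fin d) × ℝ × EuclideanSpace ℝ (Fin d) => k q.1 q.2.1 q.2.2)
      (S ×ˢ (Set.Ici 0 ×ˢ S)))
    (hkbd : ∃ C, ∀ x ∈ S, ∀ a ∈ Set.Ici (0:ℝ), ∀ y ∈ S, k x a y ≤ C)
    (hknn : ∀ x ∈ S, ∀ a ∈ Set.Ici (0:ℝ), ∀ y ∈ S, 0 ≤ k x a y)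
    (p : ℝ) (hp : p ∈ Set.Ioo (0:ℝ) 1)
    (ε₀ : ℝ) (hε₀ : 0 < ε₀) (I : Set ℝ) (hI : I ⊆ Set.Ici 0)
    (hIint : (interior I).Nonempty)
    (hA4 : ∀ x ∈ S, ∀ y ∈ S, dist y x < ε₀ →
      I ⊆ tsupport (fun a => k x a y) ∩ tsupport (fun a => B x a))
    :
    (∀ lam₁ lam₂ : ℝ, -Dlow < lam₁ → lam₁ < lam₂ → ∀ x ∈ S, ∀ y ∈ S,
      rfun B D p lam₂ x < rfun B D p lam₁ x ∧
      Kfun B D k p lam₂ x y ≤ Kfun B D k p lam₁ x y) ∧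
    (∀ lam₀ : ℝ, -Dlow < lam₀ →
      Tendsto (fun lam => ⨆ x : S, |rfun B D p lam (x : EuclideanSpace ℝ (Fin d)) -
          rfun B D p lam₀ (x : EuclideanSpace ℝ (Fin d))|)
        (𝓝[Set.Ioi (-Dlow)] lam₀) (𝓝 0) ∧
      Tendsto (fun lam => ⨆ x : S, ⨆ y : S,
          |Kfun B D k p lam (x : EuclideanSpace ℝ (Fin d)) (y : EuclideanSpace ℝ (Fin d)) -
            Kfun B D k p lam₀ (x : EuclideanSpace ℝ (Fin d)) (y : EuclideanSpace ℝ (Fin d))|)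
        (𝓝[Set.Ioi (-Dlow)] lam₀) (𝓝 0)) ∧
    (ContinuousOn (fun lam => ⨆ x : S, rfun B D p lam (x : EuclideanSpace ℝ (Fin d)))
      (Set.Ioi (-Dlow)) ∧
    StrictAntiOn (fun lam => ⨆ x : S, rfun B D p lam (x : EuclideanSpace ℝ (Fin d)))
      (Set.Ioi (-Dlow))) :=
  stmt13_general Ω S hΩne hSdef hScomp B D hBcont hBbd hBnn Dlow hDcont hDlb k hkcont hkbd hknn p hp
    ε₀ hε₀ I hI hIint hA4
end
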